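/- For every a ≥ 0, lim_{b→a} R_b = R_a; that is, the map a ↦ R_a from [0,∞) to (0,∞] is continuous (with the topology of the extended reals on the target). -/

import Mathlib

/-!
Solutions with initial value `b` are exactly the fixed points of the integral operator
`T_b v (r) = b + ∫₀ʳ s^(1-m) ∫₀ˢ t^(m-1) φ(v t) dt ds`, which is monotone in `v` because `φ` is
nondecreasing. Hence iterating `T_b` from a supersolution `S ≥ b` (one with `T_b S ≤ S`) gives a
decreasing sequence converging to a solution on the domain of `S`.

Continuity of `a ↦ R_a` follows from three comparisons. A solution from `a` is a supersolution for
every smaller initial value, so `R` is antitone. A solution `u` from `b`, restarted at radius `r`,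
is a supersolution for every initial value `≤ u r` on a radius shorter by `r`, and
`u r ≥ b + φ(b) r² / (2m)`; this gives lower semicontinuity where `φ a > 0`, and upper
semicontinuity (`R_a < ∞` forces `φ a > 0`). Where `φ a = 0` we have `R_a = ∞`, and the Lipschitz
bound `φ t ≤ K (t - a)` makes `a + (b - a) exp (K r² / 2m)` a supersolution on any prescribed
interval once `b > a` is close enough to `a`.
-/

open MeasureTheory Real Filter Set
open scoped ENNReal Topology

noncomputable section

/-- The interval [0, R) for an extended-real radius `R`. -/
def odeDom (R : ℝ≥0∞) : Set ℝ := {r : ℝ | 0 ≤ r ∧ ENNReal.ofReal r < R}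

/-- `u` is a solution with initial value `a` on `[0, R)` of
u'' + ((m-1)/r) u' = φ(u), u(0) = a, u'(0) = 0, with `u` nonnegative and C². -/
def IsSolOn (m : ℝ) (φ : ℝ → ℝ) (a : ℝ) (R : ℝ≥0∞) (u : ℝ → ℝ) : Prop :=
  ContDiffOn ℝ 2 u (odeDom R) ∧
  (∀ r ∈ odeDom R, 0 ≤ u r) ∧
  u 0 = a ∧
  derivWithin u (Set.Ici 0) 0 = 0 ∧
  ∀ r : ℝ, 0 < r → ENNReal.ofReal r < R →
    deriv (deriv u) r + ((m - 1) / r) * deriv u r = φ (u r)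

/-- The maximal existence radius `R_a`: the supremum of all `R ∈ (0, ∞]` such that a solution
with initial value `a` exists on `[0, R)`. -/
def maxRadius (m : ℝ) (φ : ℝ → ℝ) (a : ℝ) : ℝ≥0∞ :=
  sSup {R : ℝ≥0∞ | 0 < R ∧ ∃ u : ℝ → ℝ, IsSolOn m φ a R u}

theorem hasDerivWithinAt_integral_Icc {f : ℝ → ℝ} {a b x : ℝ}
    (hf : ContinuousOn f (Icc a b)) (hx : x ∈ Icc a b) :
    HasDerivWithinAt (fun y => ∫ t in a..y, f t) (f x) (Icc a b) x := by
  have : Fact (x ∈ Icc a b) := ⟨hx⟩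
  exact intervalIntegral.integral_hasDerivWithinAt_right
    ((hf.mono (Icc_subset_Icc_right hx.2)).intervalIntegrable_of_Icc hx.1)
    (hf.stronglyMeasurableAtFilter_nhdsWithin measurableSet_Icc x) (hf x hx)

theorem contDiffOn_succ_of_hasDerivWithinAt {f f' : ℝ → ℝ} {s : Set ℝ} {n : ℕ}
    (hs : UniqueDiffOn ℝ s) (hf : ∀ x ∈ s, HasDerivWithinAt f (f' x) s x)
    (hf' : ContDiffOn ℝ n f' s) : ContDiffOn ℝ (n + 1) f s := by
  rw [contDiffOn_succ_iff_derivWithin hs]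
  refine ⟨fun x hx => (hf x hx).differentiableWithinAt, by simp, ?_⟩
  exact hf'.congr fun x hx => (hf x hx).derivWithin (hs x hx)

theorem contDiffOn_one_Ico_of_tendsto_deriv {f f' : ℝ → ℝ} {a b L : ℝ} (hab : a < b)
    (hfa : ContinuousWithinAt f (Ici a) a) (hf : ∀ x ∈ Ioo a b, HasDerivAt f (f' x) x)
    (hf' : ContinuousOn f' (Ioo a b)) (hlim : Tendsto f' (𝓝[>] a) (𝓝 L)) :
    ContDiffOn ℝ 1 f (Ico a b) := by
  classical
  have hfa' : HasDerivWithinAt f L (Ici a) a := by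
    refine hasDerivWithinAt_Ici_of_tendsto_deriv
      (fun x hx => (hf x hx).differentiableAt.differentiableWithinAt)
      (hfa.mono (Ioo_subset_Ioi_self.trans Ioi_subset_Ici_self)) (Ioo_mem_nhdsGT hab)
      (hlim.congr' ?_)
    filter_upwards [Ioo_mem_nhdsGT hab] with x hx using (hf x hx).deriv.symm
  have hf'' : ContDiffOn ℝ (0 : ℕ) (Function.update f' a L) (Ico a b) := by
    rw [Nat.cast_zero, contDiffOn_zero, continuousOn_update_iff, Ico_sdiff_left]
    exact ⟨hf', fun _ => hlim.mono_left (nhdsWithin_mono _ Ioo_subset_Ioi_self)⟩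
  have hd : ∀ x ∈ Ico a b, HasDerivWithinAt f (Function.update f' a L x) (Ico a b) x := by
    intro x hx
    rcases hx.1.eq_or_lt with rfl | hax
    · simpa using hfa'.mono Ico_subset_Ici_self
    · rw [Function.update_of_ne hax.ne']
      exact (hf x ⟨hax, hx.2⟩).hasDerivWithinAt
  simpa using contDiffOn_succ_of_hasDerivWithinAt (uniqueDiffOn_Ico a b) hd hf''

theorem continuousOn_primitive_Icc {f : ℝ → ℝ} {a b : ℝ}
    (hf : IntervalIntegrable f volume a b) :
    ContinuousOn (fun x => ∫ t in a..x, f t) (Icc a b) :=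
  (intervalIntegral.continuousOn_primitive_interval' hf left_mem_uIcc).mono Icc_subset_uIcc

theorem exists_pos_add_ofReal_lt {x y : ℝ≥0∞} (h : x < y) :
    ∃ ε : ℝ, 0 < ε ∧ x + ENNReal.ofReal ε < y := by
  obtain ⟨ε, -, hε0, hε⟩ := ENNReal.lt_iff_exists_real_btwn.1 (tsub_pos_of_lt h)
  exact ⟨ε, ENNReal.ofReal_pos.1 hε0, lt_tsub_iff_left.1 hε⟩

theorem exists_le_mul_sub_of_locallyLipschitzOn {φ : ℝ → ℝ} {a : ℝ}
    (hφ : LocallyLipschitzOn (Ici 0) φ) (ha : 0 ≤ a) (hφa : φ a = 0) :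
    ∃ K δ : ℝ, 0 ≤ K ∧ 0 < δ ∧ ∀ t ∈ Icc a (a + δ), φ t ≤ K * (t - a) := by
  obtain ⟨K, s, hs, hK⟩ := hφ ha
  obtain ⟨ε, hε, hεs⟩ := Metric.mem_nhdsWithin_iff.1 hs
  have hmem : ∀ t ∈ Icc a (a + ε / 2), t ∈ s := fun t ht => hεs
    ⟨by rw [Metric.mem_ball, Real.dist_eq, abs_of_nonneg (by linarith [ht.1])]; linarith [ht.2],
      ha.trans ht.1⟩
  refine ⟨K, ε / 2, K.2, half_pos hε, fun t ht => ?_⟩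
  have := hK.dist_le_mul t (hmem t ht) a (hmem a ⟨le_rfl, by linarith⟩)
  rw [Real.dist_eq, Real.dist_eq, hφa, sub_zero, abs_of_nonneg (sub_nonneg.2 ht.1)] at this
  exact (le_abs_self _).trans this

section Rpow

variable {m s : ℝ}

theorem rpow_one_sub_mul_rpow_sub_one (hs : 0 < s) : s ^ (1 - m) * s ^ (m - 1) = 1 := by
  rw [← rpow_add hs, sub_add_sub_cancel', sub_self, rpow_zero]

theorem rpow_one_sub_mul_rpow (hs : 0 < s) : s ^ (1 - m) * s ^ m = s := by
  rw [← rpow_add hs, sub_add_cancel, rpow_one]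

theorem rpow_one_sub_mul_rpow_sub_one_eq_div_rpow (hs : 0 < s) {t : ℝ} (ht : 0 ≤ t) :
    s ^ (1 - m) * t ^ (m - 1) = (t / s) ^ (m - 1) := by
  rw [div_rpow ht hs.le, show 1 - m = -(m - 1) by ring, rpow_neg hs.le, inv_mul_eq_div]

end Rpow

/-- A radial solution satisfies `(r^(m-1) u')' = r^(m-1) φ(u)`, so that
`u' = radialFlux m (φ ∘ u)`. -/
def radialFlux (m : ℝ) (g : ℝ → ℝ) (s : ℝ) : ℝ :=
  s ^ (1 - m) * ∫ t in (0:ℝ)..s, t ^ (m - 1) * g t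

section RadialFlux

variable {m : ℝ} {g g' : ℝ → ℝ} {r s : ℝ}

@[simp]
theorem radialFlux_zero : radialFlux m g 0 = 0 := by
  simp [radialFlux]

theorem intervalIntegrable_rpow_mul (hm : 1 ≤ m) {a b : ℝ}
    (hg : IntervalIntegrable g volume a b) :
    IntervalIntegrable (fun t => t ^ (m - 1) * g t) volume a b :=
  hg.continuousOn_mul (continuous_rpow_const (by linarith)).continuousOn

theorem radialFlux_const (hm : 0 < m) (hs : 0 ≤ s) (c : ℝ) :
    radialFlux m (fun _ => c) s = c / m * s := by
  rcases hs.eq_or_lt with rfl | hs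
  · simp
  rw [radialFlux, intervalIntegral.integral_mul_const, integral_rpow (Or.inl (by linarith)),
    sub_add_cancel, zero_rpow hm.ne', sub_zero]
  rw [show s ^ (1 - m) * (s ^ m / m * c) = s ^ (1 - m) * s ^ m * c / m by ring,
    rpow_one_sub_mul_rpow hs]
  ring

theorem radialFlux_nonneg (hs : 0 ≤ s) (hg : ∀ t ∈ Icc 0 s, 0 ≤ g t) :
    0 ≤ radialFlux m g s :=
  mul_nonneg (rpow_nonneg hs _) <| intervalIntegral.integral_nonneg hs fun t ht =>
    mul_nonneg (rpow_nonneg ht.1 _) (hg t ht)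

theorem radialFlux_mono (hm : 1 ≤ m) (hs : 0 ≤ s) (hg : IntervalIntegrable g volume 0 s)
    (hg' : IntervalIntegrable g' volume 0 s) (h : ∀ t ∈ Icc 0 s, g t ≤ g' t) :
    radialFlux m g s ≤ radialFlux m g' s :=
  mul_le_mul_of_nonneg_left (intervalIntegral.integral_mono_on hs
    (intervalIntegrable_rpow_mul hm hg) (intervalIntegrable_rpow_mul hm hg')
    fun t ht => mul_le_mul_of_nonneg_left (h t ht) (rpow_nonneg ht.1 _)) (rpow_nonneg hs _)

theorem le_radialFlux (hm : 1 ≤ m) (hs : 0 ≤ s) (hg : IntervalIntegrable g volume 0 s) {c : ℝ}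
    (h : ∀ t ∈ Icc 0 s, c ≤ g t) : c / m * s ≤ radialFlux m g s := by
  rw [← radialFlux_const (by linarith) hs]
  exact radialFlux_mono hm hs intervalIntegrable_const hg h

theorem radialFlux_le (hm : 1 ≤ m) (hs : 0 ≤ s) (hg : IntervalIntegrable g volume 0 s) {c : ℝ}
    (h : ∀ t ∈ Icc 0 s, g t ≤ c) : radialFlux m g s ≤ c / m * s := by
  rw [← radialFlux_const (by linarith) hs]
  exact radialFlux_mono hm hs hg intervalIntegrable_const h

theorem abs_radialFlux_le (hm : 1 ≤ m) (hs : 0 ≤ s) (hg : IntervalIntegrable g volume 0 s) :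
    |radialFlux m g s| ≤ ∫ t in (0:ℝ)..s, |g t| := by
  rcases hs.eq_or_lt with rfl | hs
  · simp
  have key :
      ‖∫ t in (0:ℝ)..s, t ^ (m - 1) * g t‖ ≤ ∫ t in (0:ℝ)..s, s ^ (m - 1) * |g t| := by
    refine intervalIntegral.norm_integral_le_of_norm_le hs.le (ae_of_all _ fun t ht => ?_)
      (hg.abs.const_mul _)
    rw [Real.norm_eq_abs, abs_mul, abs_of_nonneg (rpow_nonneg ht.1.le _)]
    exact mul_le_mul_of_nonneg_right (rpow_le_rpow ht.1.le ht.2 (by linarith)) (abs_nonneg _)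
  rw [Real.norm_eq_abs, intervalIntegral.integral_const_mul] at key
  rw [radialFlux, abs_mul, abs_of_nonneg (rpow_nonneg hs.le _)]
  calc _ ≤ s ^ (1 - m) * (s ^ (m - 1) * ∫ t in (0:ℝ)..s, |g t|) :=
        mul_le_mul_of_nonneg_left key (rpow_nonneg hs.le _)
    _ = _ := by rw [← mul_assoc, rpow_one_sub_mul_rpow_sub_one hs, one_mul]

theorem radialFlux_continuousOn (hm : 1 ≤ m) (hg : IntervalIntegrable g volume 0 r) :
    ContinuousOn (radialFlux m g) (Icc 0 r) := by
  intro s hs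
  rcases hs.1.eq_or_lt with rfl | hs0
  · have hprim := continuousOn_primitive_Icc hg.abs 0 hs
    rw [ContinuousWithinAt, radialFlux_zero]
    refine squeeze_zero_norm' ?_ (by simpa using hprim.tendsto)
    filter_upwards [self_mem_nhdsWithin] with t ht
    exact abs_radialFlux_le hm ht.1 (hg.mono_set (uIcc_subset_uIcc_left (Icc_subset_uIcc ht)))
  · exact (continuousAt_rpow_const _ _ (Or.inl hs0.ne')).continuousWithinAt.mul
      (continuousOn_primitive_Icc (intervalIntegrable_rpow_mul hm hg) s hs)

theorem radialFlux_hasDerivAt (hm : 1 ≤ m) (hg : ContinuousOn g (Icc 0 r)) (hs : s ∈ Ioo 0 r) :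
    HasDerivAt (radialFlux m g) (g s - (m - 1) / s * radialFlux m g s) s := by
  have hw : ContinuousOn (fun t => t ^ (m - 1) * g t) (Icc 0 r) :=
    (continuous_rpow_const (by linarith)).continuousOn.mul hg
  have hP : HasDerivAt (fun y => ∫ t in (0:ℝ)..y, t ^ (m - 1) * g t) (s ^ (m - 1) * g s) s :=
    intervalIntegral.integral_hasDerivAt_right
      ((hw.mono (Icc_subset_Icc_right hs.2.le)).intervalIntegrable_of_Icc hs.1.le)
      ((hw.mono Ioo_subset_Icc_self).stronglyMeasurableAtFilter isOpen_Ioo s hs)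
      (hw.continuousAt (Icc_mem_nhds hs.1 hs.2))
  refine ((hasDerivAt_rpow_const (p := 1 - m) (Or.inl hs.1.ne')).fun_mul hP).congr_deriv ?_
  rw [radialFlux, ← mul_assoc (s ^ (1 - m)), rpow_one_sub_mul_rpow_sub_one hs.1,
    rpow_sub_one hs.1.ne']
  field_simp
  ring

theorem tendsto_radialFlux_div (hm : 1 ≤ m) (hr : 0 < r) (hg : ContinuousOn g (Icc 0 r)) :
    Tendsto (fun s => radialFlux m g s / s) (𝓝[>] 0) (𝓝 (g 0 / m)) := by
  have hm0 : 0 < m := by linarith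
  rw [Metric.tendsto_nhdsWithin_nhds]
  intro ε hε
  obtain ⟨δ, hδ, hgδ⟩ :=
    Metric.continuousWithinAt_iff.1 (hg 0 ⟨le_rfl, hr.le⟩) (ε * m / 2) (by positivity)
  refine ⟨min δ r, lt_min hδ hr, fun {s} hs hsδ => ?_⟩
  have hs0 : 0 < s := hs
  rw [Real.dist_eq, sub_zero, abs_of_pos hs0, lt_min_iff] at hsδ
  have hsub : Icc 0 s ⊆ Icc 0 r := Icc_subset_Icc_right hsδ.2.le
  have hgs : IntervalIntegrable g volume 0 s := (hg.mono hsub).intervalIntegrable_of_Icc hs0.le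
  have hclose : ∀ t ∈ Icc 0 s, |g t - g 0| < ε * m / 2 := fun t ht => by
    rw [← Real.dist_eq]
    exact hgδ (hsub ht) (by rw [Real.dist_eq, sub_zero, abs_of_nonneg ht.1]; linarith [ht.2])
  have hlo := le_radialFlux hm hs0.le hgs fun t ht =>
    sub_le_comm.1 (abs_sub_lt_iff.1 (hclose t ht)).2.le
  have hhi := radialFlux_le hm hs0.le hgs fun t ht =>
    sub_le_iff_le_add'.1 (abs_sub_lt_iff.1 (hclose t ht)).1.le
  rw [Real.dist_eq, abs_sub_lt_iff]
  constructor
  · rw [sub_lt_iff_lt_add', div_lt_iff₀ hs0]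
    calc radialFlux m g s ≤ (g 0 + ε * m / 2) / m * s := hhi
      _ < (g 0 / m + ε) * s := by field_simp; nlinarith
  · rw [sub_lt_comm, lt_div_iff₀ hs0]
    calc (g 0 / m - ε) * s < (g 0 - ε * m / 2) / m * s := by field_simp; nlinarith
      _ ≤ radialFlux m g s := hlo

theorem radialFlux_contDiffOn (hm : 1 ≤ m) (hr : 0 < r) (hg : ContinuousOn g (Icc 0 r)) :
    ContDiffOn ℝ 1 (radialFlux m g) (Ico 0 r) := by
  have hg0 : Tendsto g (𝓝[>] 0) (𝓝 (g 0)) :=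
    ((hg 0 ⟨le_rfl, hr.le⟩).mono_of_mem_nhdsWithin (Icc_mem_nhdsGT hr)).tendsto
  refine contDiffOn_one_Ico_of_tendsto_deriv hr
    ((radialFlux_continuousOn hm (hg.intervalIntegrable_of_Icc hr.le) 0 ⟨le_rfl, hr.le⟩
      ).mono_of_mem_nhdsWithin (Icc_mem_nhdsGE hr))
    (fun s hs => radialFlux_hasDerivAt hm hg hs) ?_
    ((hg0.sub ((tendsto_const_nhds (x := m - 1)).mul (tendsto_radialFlux_div hm hr hg))).congr
      fun s => by ring)
  intro s hs
  refine ((hg s (Ioo_subset_Icc_self hs)).mono Ioo_subset_Icc_self).sub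
    (((continuousAt_const.div continuousAt_id hs.1.ne').continuousWithinAt).mul ?_)
  exact ((radialFlux_continuousOn hm (hg.intervalIntegrable_of_Icc hr.le)) s
    (Ioo_subset_Icc_self hs)).mono Ioo_subset_Icc_self

/-- The kernel `s^(1-m) t^(m-1) = (t/s)^(m-1)` of the flux increases when `t` and `s` are both
shifted by `a ≥ 0`. -/
theorem radialFlux_shift_le (hm : 1 ≤ m) {a : ℝ} (ha : 0 ≤ a) (hs : 0 ≤ s)
    (hg : IntervalIntegrable g volume 0 (a + s)) (hg0 : ∀ t ∈ Icc 0 (a + s), 0 ≤ g t) :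
    radialFlux m (fun t => g (a + t)) s ≤ radialFlux m g (a + s) := by
  rcases hs.eq_or_lt with rfl | hs
  · simpa using radialFlux_nonneg (by simpa) hg0
  have has : 0 < a + s := by linarith
  have hga : IntervalIntegrable g volume a (a + s) :=
    hg.mono_set (uIcc_subset_uIcc (Icc_subset_uIcc ⟨ha, by linarith⟩) right_mem_uIcc)
  have hga' : IntervalIntegrable (fun t => g (a + t)) volume 0 s := by
    simpa using hga.comp_add_left a
  have hshift : IntervalIntegrable (fun t => (a + t) ^ (m - 1) * g (a + t)) volume 0 s := by
    simpa using (intervalIntegrable_rpow_mul hm hga).comp_add_left a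
  have hkernel : ∀ t ∈ Icc 0 s, s ^ (1 - m) * (t ^ (m - 1) * g (a + t)) ≤
      (a + s) ^ (1 - m) * ((a + t) ^ (m - 1) * g (a + t)) := by
    intro t ht
    rw [← mul_assoc, ← mul_assoc, rpow_one_sub_mul_rpow_sub_one_eq_div_rpow hs ht.1,
      rpow_one_sub_mul_rpow_sub_one_eq_div_rpow has (by linarith [ht.1])]
    refine mul_le_mul_of_nonneg_right (rpow_le_rpow (div_nonneg ht.1 hs.le) ?_ (by linarith))
      (hg0 _ ⟨by linarith [ht.1], by linarith [ht.2]⟩)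
    rw [div_le_div_iff₀ hs has]
    nlinarith [ht.2]
  calc radialFlux m (fun t => g (a + t)) s
      = ∫ t in (0:ℝ)..s, s ^ (1 - m) * (t ^ (m - 1) * g (a + t)) := by
        rw [radialFlux, intervalIntegral.integral_const_mul]
    _ ≤ ∫ t in (0:ℝ)..s, (a + s) ^ (1 - m) * ((a + t) ^ (m - 1) * g (a + t)) :=
        intervalIntegral.integral_mono_on hs.le ((intervalIntegrable_rpow_mul hm hga').const_mul _)
          (hshift.const_mul _) hkernel
    _ = (a + s) ^ (1 - m) * ∫ t in a..(a + s), t ^ (m - 1) * g t := by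
        rw [intervalIntegral.integral_const_mul, intervalIntegral.integral_comp_add_left
          (fun t => t ^ (m - 1) * g t), add_zero]
    _ ≤ radialFlux m g (a + s) := by
        rw [radialFlux, ← intervalIntegral.integral_add_adjacent_intervals
          (intervalIntegrable_rpow_mul hm (hg.mono_set (uIcc_subset_uIcc_left
            (Icc_subset_uIcc ⟨ha, by linarith⟩)))) (intervalIntegrable_rpow_mul hm hga)]
        refine mul_le_mul_of_nonneg_left (le_add_of_nonneg_left ?_) (rpow_nonneg has.le _)
        exact intervalIntegral.integral_nonneg ha fun t ht =>
          mul_nonneg (rpow_nonneg ht.1 _) (hg0 t ⟨ht.1, by linarith [ht.2]⟩)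

theorem tendsto_integral_radialFlux {G : ℕ → ℝ → ℝ} {C : ℝ} (hm : 1 ≤ m) (hr : 0 ≤ r)
    (hG : ∀ n, ContinuousOn (G n) (Icc 0 r)) (hGC : ∀ n, ∀ t ∈ Icc 0 r, |G n t| ≤ C)
    (hlim : ∀ t ∈ Icc 0 r, Tendsto (fun n => G n t) atTop (𝓝 (g t))) :
    Tendsto (fun n => ∫ s in (0:ℝ)..r, radialFlux m (G n) s) atTop
      (𝓝 (∫ s in (0:ℝ)..r, radialFlux m g s)) := by
  have hmem : ∀ {s t : ℝ}, s ∈ Icc 0 r → t ∈ uIoc 0 s → t ∈ Icc 0 r := fun hs ht => by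
    rw [uIoc_of_le hs.1] at ht
    exact ⟨ht.1.le, ht.2.trans hs.2⟩
  have hr' : r ∈ Icc 0 r := ⟨hr, le_rfl⟩
  refine intervalIntegral.tendsto_integral_filter_of_dominated_convergence (fun s => C * s)
    (Eventually.of_forall fun n => ?_) (Eventually.of_forall fun n => ae_of_all _ fun s hs => ?_)
    ((continuous_const.mul continuous_id).intervalIntegrable 0 r) (ae_of_all _ fun s hs => ?_)
  · exact ((radialFlux_continuousOn hm ((hG n).intervalIntegrable_of_Icc hr)).mono
      fun t ht => hmem hr' ht).aestronglyMeasurable measurableSet_uIoc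
  · have hs' : s ∈ Icc 0 r := hmem hr' hs
    rw [Real.norm_eq_abs]
    refine (abs_radialFlux_le hm hs'.1 (((hG n).mono (Icc_subset_Icc_right hs'.2)
      ).intervalIntegrable_of_Icc hs'.1)).trans ((Real.le_norm_self _).trans ?_)
    have := intervalIntegral.norm_integral_le_of_norm_le_const (f := fun t => |G n t|) (C := C)
      fun t ht => by simpa using hGC n t (hmem hs' ht)
    rwa [sub_zero, abs_of_nonneg hs'.1] at this
  · have hs' : s ∈ Icc 0 r := hmem hr' hs
    refine tendsto_const_nhds.mul (intervalIntegral.tendsto_integral_filter_of_dominated_convergence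
      (fun t => t ^ (m - 1) * C) (Eventually.of_forall fun n => ?_)
      (Eventually.of_forall fun n => ae_of_all _ fun t ht => ?_)
      (((continuous_rpow_const (by linarith)).mul continuous_const).intervalIntegrable 0 s)
      (ae_of_all _ fun t ht => tendsto_const_nhds.mul (hlim t (hmem hs' ht))))
    · exact (((continuous_rpow_const (by linarith)).continuousOn.mul (hG n)).mono
        fun t ht => hmem hs' ht).aestronglyMeasurable measurableSet_uIoc
    · have ht' := hmem hs' ht
      rw [norm_mul, Real.norm_eq_abs, Real.norm_eq_abs, abs_of_nonneg (rpow_nonneg ht'.1 _)]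
      exact mul_le_mul_of_nonneg_left (hGC n t ht') (rpow_nonneg ht'.1 _)

end RadialFlux

section OdeDom

variable {R : ℝ≥0∞} {r : ℝ}

theorem Icc_subset_odeDom (h : ENNReal.ofReal r < R) : Icc 0 r ⊆ odeDom R :=
  fun _ ht => ⟨ht.1, (ENNReal.ofReal_le_ofReal ht.2).trans_lt h⟩

theorem exists_gt_ofReal_lt (h : ENNReal.ofReal r < R) :
    ∃ r', r < r' ∧ ENNReal.ofReal r' < R := by
  obtain ⟨r', -, hrr', hr'⟩ := ENNReal.lt_iff_exists_real_btwn.1 h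
  exact ⟨r', (ENNReal.ofReal_lt_ofReal_iff'.1 hrr').1, hr'⟩

theorem odeDom_mem_nhds (hr : 0 < r) (h : ENNReal.ofReal r < R) : odeDom R ∈ 𝓝 r := by
  obtain ⟨r', hrr', hr'⟩ := exists_gt_ofReal_lt h
  exact mem_of_superset (Icc_mem_nhds hr hrr') (Icc_subset_odeDom hr')

theorem odeDom_inter_Iio (h : ENNReal.ofReal r < R) : odeDom R ∩ Iio r = Ico 0 r := by
  refine Subset.antisymm (fun t ht => ⟨ht.1.1, ht.2⟩) fun t ht => ⟨⟨ht.1, ?_⟩, ht.2⟩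
  exact (ENNReal.ofReal_le_ofReal ht.2.le).trans_lt h

theorem continuousOn_odeDom {f : ℝ → ℝ}
    (hf : ∀ r, 0 < r → ENNReal.ofReal r < R → ContinuousOn f (Icc 0 r)) :
    ContinuousOn f (odeDom R) := by
  refine continuousOn_of_locally_continuousOn fun x hx => ?_
  obtain ⟨r, hxr, hr⟩ := exists_gt_ofReal_lt hx.2
  refine ⟨Iio r, isOpen_Iio, hxr, (hf r (hx.1.trans_lt hxr) hr).mono ?_⟩
  rw [odeDom_inter_Iio hr]
  exact Ico_subset_Icc_self

theorem contDiffOn_odeDom {f : ℝ → ℝ} {n : WithTop ℕ∞}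
    (hf : ∀ r, 0 < r → ENNReal.ofReal r < R → ContDiffOn ℝ n f (Ico 0 r)) :
    ContDiffOn ℝ n f (odeDom R) := by
  refine contDiffOn_of_locally_contDiffOn fun x hx => ?_
  obtain ⟨r, hxr, hr⟩ := exists_gt_ofReal_lt hx.2
  refine ⟨Iio r, isOpen_Iio, hxr, ?_⟩
  rw [odeDom_inter_Iio hr]
  exact hf r (hx.1.trans_lt hxr) hr

end OdeDom

/-- The integral form of the problem: solutions with initial value `b` are the fixed points
of `radialOp m φ b`. -/
def radialOp (m : ℝ) (φ : ℝ → ℝ) (b : ℝ) (v : ℝ → ℝ) (r : ℝ) : ℝ :=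
  b + ∫ s in (0:ℝ)..r, radialFlux m (fun t => φ (v t)) s

section RadialOp

variable {m b r : ℝ} {φ : ℝ → ℝ} {v v' : ℝ → ℝ}

@[simp]
theorem radialOp_zero : radialOp m φ b v 0 = b := by
  simp [radialOp]

theorem radialFlux_intervalIntegrable {g : ℝ → ℝ} (hm : 1 ≤ m) (hr : 0 ≤ r)
    (hg : IntervalIntegrable g volume 0 r) : IntervalIntegrable (radialFlux m g) volume 0 r :=
  (radialFlux_continuousOn hm hg).intervalIntegrable_of_Icc hr

theorem intervalIntegrable_comp (hφ : ContinuousOn φ (Ici 0)) (hv : ContinuousOn v (Icc 0 r))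
    (hv0 : ∀ t ∈ Icc 0 r, 0 ≤ v t) {t : ℝ} (ht : t ∈ Icc 0 r) :
    IntervalIntegrable (fun x => φ (v x)) volume 0 t :=
  ((hφ.comp hv hv0).mono (Icc_subset_Icc_right ht.2)).intervalIntegrable_of_Icc ht.1

theorem radialOp_continuousOn (hm : 1 ≤ m) (hr : 0 ≤ r)
    (hv : IntervalIntegrable (fun t => φ (v t)) volume 0 r) :
    ContinuousOn (radialOp m φ b v) (Icc 0 r) :=
  continuousOn_const.add (continuousOn_primitive_Icc (radialFlux_intervalIntegrable hm hr hv))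

theorem le_radialOp (hr : 0 ≤ r) (hv : ∀ t ∈ Icc 0 r, 0 ≤ φ (v t)) :
    b ≤ radialOp m φ b v r :=
  le_add_of_nonneg_right <| intervalIntegral.integral_nonneg hr fun _ hs =>
    radialFlux_nonneg hs.1 fun t ht => hv t ⟨ht.1, ht.2.trans hs.2⟩

theorem radialOp_monotoneOn (hm : 1 ≤ m) (hv : IntervalIntegrable (fun t => φ (v t)) volume 0 r)
    (hv0 : ∀ t ∈ Icc 0 r, 0 ≤ φ (v t)) : MonotoneOn (radialOp m φ b v) (Icc 0 r) := by
  intro x hx y hy hxy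
  refine (add_le_add_iff_left b).2 (intervalIntegral.integral_mono_interval le_rfl hx.1 hxy ?_
    (radialFlux_intervalIntegrable hm hy.1 (hv.mono_set (uIcc_subset_uIcc_left
      (Icc_subset_uIcc hy)))))
  refine (ae_restrict_iff' measurableSet_Ioc).2 (ae_of_all _ fun s hs => ?_)
  exact radialFlux_nonneg hs.1.le fun t ht => hv0 t ⟨ht.1, ht.2.trans (hs.2.trans hy.2)⟩

theorem radialOp_le_radialOp (hm : 1 ≤ m) (hr : 0 ≤ r)
    (hv : IntervalIntegrable (fun t => φ (v t)) volume 0 r)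
    (hv' : IntervalIntegrable (fun t => φ (v' t)) volume 0 r)
    (h : ∀ t ∈ Icc 0 r, φ (v t) ≤ φ (v' t)) :
    radialOp m φ b v r ≤ radialOp m φ b v' r := by
  refine (add_le_add_iff_left b).2 (intervalIntegral.integral_mono_on hr
    (radialFlux_intervalIntegrable hm hr hv) (radialFlux_intervalIntegrable hm hr hv')
    fun s hs => ?_)
  have hsub : uIcc 0 s ⊆ uIcc 0 r := uIcc_subset_uIcc_left (Icc_subset_uIcc hs)
  exact radialFlux_mono hm hs.1 (hv.mono_set hsub) (hv'.mono_set hsub)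
    fun t ht => h t ⟨ht.1, ht.2.trans hs.2⟩

theorem add_le_radialOp (hm : 1 ≤ m) (hr : 0 ≤ r)
    (hv : IntervalIntegrable (fun t => φ (v t)) volume 0 r) {c : ℝ}
    (h : ∀ t ∈ Icc 0 r, c ≤ φ (v t)) : b + c / m * (r ^ 2 / 2) ≤ radialOp m φ b v r := by
  have hint : ∫ s in (0:ℝ)..r, c / m * s = c / m * (r ^ 2 / 2) := by
    rw [intervalIntegral.integral_const_mul, integral_id]
    ring
  rw [← hint]
  refine (add_le_add_iff_left b).2 (intervalIntegral.integral_mono_on hr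
    ((continuous_const.mul continuous_id).intervalIntegrable 0 r)
    (radialFlux_intervalIntegrable hm hr hv) fun s hs => ?_)
  exact le_radialFlux hm hs.1 (hv.mono_set (uIcc_subset_uIcc_left (Icc_subset_uIcc hs)))
    fun t ht => h t ⟨ht.1, ht.2.trans hs.2⟩

theorem hasDerivWithinAt_radialOp (hm : 1 ≤ m) (hv : ContinuousOn (fun t => φ (v t)) (Icc 0 r))
    {x : ℝ} (hx : x ∈ Icc 0 r) :
    HasDerivWithinAt (radialOp m φ b v) (radialFlux m (fun t => φ (v t)) x) (Icc 0 r) x :=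
  (hasDerivWithinAt_integral_Icc (radialFlux_continuousOn hm
    (hv.intervalIntegrable_of_Icc (hx.1.trans hx.2))) hx).const_add b

end RadialOp

section Solutions

variable {m b : ℝ} {φ : ℝ → ℝ} {R : ℝ≥0∞} {u : ℝ → ℝ}

theorem IsSolOn.continuousOn_comp (hφ : ContinuousOn φ (Ici 0)) (hu : IsSolOn m φ b R u)
    {r : ℝ} (hrR : ENNReal.ofReal r < R) : ContinuousOn (fun t => φ (u t)) (Icc 0 r) :=
  hφ.comp (hu.1.continuousOn.mono (Icc_subset_odeDom hrR)) fun t ht =>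
    hu.2.1 t (Icc_subset_odeDom hrR ht)

theorem IsSolOn.deriv_eq_radialFlux (hm : 1 ≤ m) (hφ : ContinuousOn φ (Ici 0))
    (hu : IsSolOn m φ b R u) {r : ℝ} (hr : 0 < r) (hrR : ENNReal.ofReal r < R) :
    deriv u r = radialFlux m (fun t => φ (u t)) r := by
  obtain ⟨hC2, -, -, hu'0, hode⟩ := id hu
  obtain ⟨r', hrr', hr'R⟩ := exists_gt_ofReal_lt hrR
  have hsub : Ico 0 r' ⊆ odeDom R := Ico_subset_Icc_self.trans (Icc_subset_odeDom hr'R)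
  set D := derivWithin u (Ico 0 r')
  have hD : ContDiffOn ℝ 1 D (Ico 0 r') :=
    ((contDiffOn_succ_iff_derivWithin (n := 1) (uniqueDiffOn_Ico 0 r')).1 (hC2.mono hsub)).2.2
  have hD0 : D 0 = 0 := by
    show derivWithin u (Ico 0 r') 0 = 0
    rw [← Ici_inter_Iio, derivWithin_inter (Iio_mem_nhds (hr.trans hrr'))]
    exact hu'0
  have hIco : ∀ t ∈ Ioo 0 r', Ico 0 r' ∈ 𝓝 t := fun t ht => Ico_mem_nhds ht.1 ht.2
  have hDeq : ∀ t ∈ Ioo 0 r', D =ᶠ[𝓝 t] deriv u := fun t ht => by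
    filter_upwards [Ioo_mem_nhds ht.1 ht.2] with s hs using derivWithin_of_mem_nhds (hIco s hs)
  have hD' : ∀ t ∈ Ioo 0 r', HasDerivAt D (deriv (deriv u) t) t := fun t ht => by
    rw [← (hDeq t ht).deriv_eq]
    exact ((hD.differentiableOn one_ne_zero t (Ioo_subset_Ico_self ht)).differentiableAt
      (hIco t ht)).hasDerivAt
  have hG : ∀ t ∈ Ioo 0 r,
      HasDerivAt (fun s => s ^ (m - 1) * D s) (t ^ (m - 1) * φ (u t)) t := by
    intro t ht
    have htr' : t ∈ Ioo 0 r' := ⟨ht.1, ht.2.trans hrr'⟩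
    refine ((hasDerivAt_rpow_const (p := m - 1) (Or.inl ht.1.ne')).fun_mul
      (hD' t htr')).congr_deriv ?_
    rw [(hDeq t htr').eq_of_nhds,
      ← hode t ht.1 ((ENNReal.ofReal_le_ofReal ht.2.le).trans_lt hrR), rpow_sub_one ht.1.ne']
    field_simp
    ring
  have hFTC := intervalIntegral.integral_eq_sub_of_hasDerivAt_of_le
    (f := fun s => s ^ (m - 1) * D s) hr.le
    (((continuous_rpow_const (by linarith)).continuousOn.mul hD.continuousOn).mono
      (Icc_subset_Ico_right hrr')) hG
    (((continuous_rpow_const (by linarith)).continuousOn.mul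
      (hu.continuousOn_comp hφ hrR)).intervalIntegrable_of_Icc hr.le)
  rw [radialFlux, hFTC, hD0, mul_zero, sub_zero, ← mul_assoc, rpow_one_sub_mul_rpow_sub_one hr,
    one_mul, ← (hDeq r ⟨hr, hrr'⟩).eq_of_nhds]

theorem IsSolOn.eq_radialOp (hm : 1 ≤ m) (hφ : ContinuousOn φ (Ici 0)) (hu : IsSolOn m φ b R u)
    {r : ℝ} (hr : 0 ≤ r) (hrR : ENNReal.ofReal r < R) : u r = radialOp m φ b u r := by
  have hdiff : ∀ t ∈ Ioo 0 r, HasDerivAt u (radialFlux m (fun t => φ (u t)) t) t := by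
    intro t ht
    have htR : ENNReal.ofReal t < R := (ENNReal.ofReal_le_ofReal ht.2.le).trans_lt hrR
    rw [← hu.deriv_eq_radialFlux hm hφ ht.1 htR]
    exact ((hu.1.contDiffAt (odeDom_mem_nhds ht.1 htR)).differentiableAt
      (by norm_num)).hasDerivAt
  rw [radialOp, intervalIntegral.integral_eq_sub_of_hasDerivAt_of_le hr
    (hu.1.continuousOn.mono (Icc_subset_odeDom hrR)) hdiff
    (radialFlux_intervalIntegrable hm hr
      ((hu.continuousOn_comp hφ hrR).intervalIntegrable_of_Icc hr)), hu.2.2.1]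
  ring

theorem IsSolOn.le_apply (hm : 1 ≤ m) (hφ : ContinuousOn φ (Ici 0))
    (hφ0 : ∀ t, 0 ≤ t → 0 ≤ φ t) (hu : IsSolOn m φ b R u) {r : ℝ}
    (hr : r ∈ odeDom R) : b ≤ u r := by
  rw [hu.eq_radialOp hm hφ hr.1 hr.2]
  exact le_radialOp hr.1 fun t ht => hφ0 _ (hu.2.1 t (Icc_subset_odeDom hr.2 ht))

theorem IsSolOn.monotoneOn (hm : 1 ≤ m) (hφ : ContinuousOn φ (Ici 0))
    (hφ0 : ∀ t, 0 ≤ t → 0 ≤ φ t) (hu : IsSolOn m φ b R u) : MonotoneOn u (odeDom R) := by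
  intro x hx y hy hxy
  have hsub := Icc_subset_odeDom hy.2
  rw [hu.eq_radialOp hm hφ hx.1 hx.2, hu.eq_radialOp hm hφ hy.1 hy.2]
  exact radialOp_monotoneOn hm ((hu.continuousOn_comp hφ hy.2).intervalIntegrable_of_Icc hy.1)
    (fun t ht => hφ0 _ (hu.2.1 t (hsub ht))) ⟨hx.1, hxy⟩ ⟨hy.1, le_rfl⟩ hxy

theorem IsSolOn.add_le (hm : 1 ≤ m) (hφ : ContinuousOn φ (Ici 0)) (hφm : MonotoneOn φ (Ici 0))
    (hφ0 : ∀ t, 0 ≤ t → 0 ≤ φ t) (hu : IsSolOn m φ b R u) {r : ℝ}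
    (hr : r ∈ odeDom R) : b + φ b / m * (r ^ 2 / 2) ≤ u r := by
  have hsub := Icc_subset_odeDom hr.2
  have hb : 0 ≤ b := hu.2.2.1 ▸ hu.2.1 0 (hsub ⟨le_rfl, hr.1⟩)
  rw [hu.eq_radialOp hm hφ hr.1 hr.2]
  exact add_le_radialOp hm hr.1 ((hu.continuousOn_comp hφ hr.2).intervalIntegrable_of_Icc hr.1)
    fun t ht => hφm hb (hu.2.1 t (hsub ht)) (hu.le_apply hm hφ hφ0 (hsub ht))

theorem IsSolOn.radialOp_shift_le (hm : 1 ≤ m) (hφ : ContinuousOn φ (Ici 0))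
    (hφ0 : ∀ t, 0 ≤ t → 0 ≤ φ t) (hu : IsSolOn m φ b R u) {a r : ℝ} (ha : 0 ≤ a)
    (hr : 0 ≤ r) (hR : ENNReal.ofReal (a + r) < R) :
    radialOp m φ (u a) (fun s => u (a + s)) r ≤ u (a + r) := by
  have har : 0 ≤ a + r := by linarith
  have haR : ENNReal.ofReal a < R := (ENNReal.ofReal_le_ofReal (by linarith)).trans_lt hR
  have hg := hu.continuousOn_comp hφ hR
  have hF := radialFlux_continuousOn hm (hg.intervalIntegrable_of_Icc har)
  have hshift : MapsTo (fun s => a + s) (Icc 0 r) (Icc 0 (a + r)) := fun s hs =>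
    ⟨by linarith [hs.1], by linarith [hs.2]⟩
  have hsplit :
      u (a + r) = u a + ∫ s in (0:ℝ)..r, radialFlux m (fun t => φ (u t)) (a + s) := by
    rw [hu.eq_radialOp hm hφ har hR, hu.eq_radialOp hm hφ ha haR, radialOp, radialOp,
      intervalIntegral.integral_comp_add_left, add_zero, add_assoc,
      intervalIntegral.integral_add_adjacent_intervals
        ((hF.mono (Icc_subset_Icc_right (by linarith))).intervalIntegrable_of_Icc ha)
        ((hF.mono (Icc_subset_Icc_left ha)).intervalIntegrable_of_Icc (by linarith))]
  rw [hsplit, radialOp]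
  refine (add_le_add_iff_left _).2 (intervalIntegral.integral_mono_on hr
    (radialFlux_intervalIntegrable hm hr
      ((hg.comp (continuous_const_add a).continuousOn hshift).intervalIntegrable_of_Icc hr))
    ((hF.comp (continuous_const_add a).continuousOn hshift).intervalIntegrable_of_Icc hr)
    fun s hs => ?_)
  exact radialFlux_shift_le hm ha hs.1
    ((hg.mono (Icc_subset_Icc_right (by linarith [hs.2]))).intervalIntegrable_of_Icc
      (by linarith [hs.1]))
    fun t ht => hφ0 _ (hu.2.1 t (Icc_subset_odeDom hR ⟨ht.1, by linarith [ht.2, hs.2]⟩))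

end Solutions

theorem isSolOn_radialOp {m b : ℝ} {φ : ℝ → ℝ} {ρ : ℝ≥0∞} {w : ℝ → ℝ} (hm : 1 ≤ m)
    (hφ : ContinuousOn φ (Ici 0)) (hρ : 0 < ρ) (hw : ContinuousOn w (odeDom ρ))
    (hw0 : ∀ r ∈ odeDom ρ, 0 ≤ w r) (hfix : ∀ r ∈ odeDom ρ, radialOp m φ b w r = w r) :
    IsSolOn m φ b ρ (radialOp m φ b w) := by
  have hg : ∀ r, ENNReal.ofReal r < ρ → ContinuousOn (fun t => φ (w t)) (Icc 0 r) :=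
    fun r hr =>
      hφ.comp (hw.mono (Icc_subset_odeDom hr)) fun t ht => hw0 t (Icc_subset_odeDom hr ht)
  have hderiv : ∀ r, ENNReal.ofReal r < ρ → ∀ x ∈ Ico 0 r,
      HasDerivWithinAt (radialOp m φ b w) (radialFlux m (fun t => φ (w t)) x) (Ico 0 r) x :=
    fun r hr x hx =>
      (hasDerivWithinAt_radialOp hm (hg r hr) (Ico_subset_Icc_self hx)).mono Ico_subset_Icc_self
  refine ⟨contDiffOn_odeDom fun r hr hrρ => ?_, fun r hr => hfix r hr ▸ hw0 r hr,
    radialOp_zero, ?_, fun r hr hrρ => ?_⟩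
  · exact contDiffOn_succ_of_hasDerivWithinAt (n := 1) (uniqueDiffOn_Ico 0 r) (hderiv r hrρ)
      (radialFlux_contDiffOn hm hr (hg r hrρ))
  · obtain ⟨r₀, hr₀, hr₀ρ⟩ := exists_gt_ofReal_lt (r := 0) (by simpa using hρ)
    have h :=
      (hderiv r₀ hr₀ρ 0 ⟨le_rfl, hr₀⟩).mono_of_mem_nhdsWithin (Ico_mem_nhdsGE hr₀)
    rw [radialFlux_zero] at h
    exact h.derivWithin (uniqueDiffOn_Ici 0 0 self_mem_Ici)
  · obtain ⟨r', hrr', hr'ρ⟩ := exists_gt_ofReal_lt hrρ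
    have hd : ∀ s ∈ Ioo 0 r',
        HasDerivAt (radialOp m φ b w) (radialFlux m (fun t => φ (w t)) s) s := fun s hs =>
      (hderiv r' hr'ρ s (Ioo_subset_Ico_self hs)).hasDerivAt (Ico_mem_nhds hs.1 hs.2)
    have hdd : deriv (radialOp m φ b w) =ᶠ[𝓝 r] radialFlux m (fun t => φ (w t)) := by
      filter_upwards [Ioo_mem_nhds hr hrr'] with s hs using (hd s hs).deriv
    rw [hdd.deriv_eq, (hd r ⟨hr, hrr'⟩).deriv,
      (radialFlux_hasDerivAt hm (hg r' hr'ρ) ⟨hr, hrr'⟩).deriv, hfix r ⟨hr.le, hrρ⟩]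
    ring

structure IsSupersolution (m : ℝ) (φ : ℝ → ℝ) (b : ℝ) (s : Set ℝ) (S : ℝ → ℝ) : Prop where
  continuousOn : ContinuousOn S s
  le_apply : ∀ t ∈ s, b ≤ S t
  radialOp_le : ∀ t ∈ s, radialOp m φ b S t ≤ S t

def iterateLimit (m : ℝ) (φ : ℝ → ℝ) (b : ℝ) (S : ℝ → ℝ) (t : ℝ) : ℝ :=
  ⨅ n, (radialOp m φ b)^[n] S t

namespace IsSupersolution

variable {m b r : ℝ} {φ : ℝ → ℝ} {s : Set ℝ} {S : ℝ → ℝ}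

theorem mono {s' : Set ℝ} (hS : IsSupersolution m φ b s S) (hs : s' ⊆ s) :
    IsSupersolution m φ b s' S :=
  ⟨hS.continuousOn.mono hs, fun t ht => hS.le_apply t (hs ht),
    fun t ht => hS.radialOp_le t (hs ht)⟩

theorem map_radialOp (hm : 1 ≤ m) (hφ : ContinuousOn φ (Ici 0)) (hφm : MonotoneOn φ (Ici 0))
    (hφ0 : ∀ t, 0 ≤ t → 0 ≤ φ t) (hb : 0 ≤ b) (hr : 0 ≤ r)
    (hS : IsSupersolution m φ b (Icc 0 r) S) :
    IsSupersolution m φ b (Icc 0 r) (radialOp m φ b S) := by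
  have hTb : ∀ t ∈ Icc 0 r, b ≤ radialOp m φ b S t := fun t ht =>
    le_radialOp ht.1 fun x hx => hφ0 _ (hb.trans (hS.le_apply x ⟨hx.1, hx.2.trans ht.2⟩))
  have hS0 : ∀ t ∈ Icc 0 r, 0 ≤ S t := fun t ht => hb.trans (hS.le_apply t ht)
  have hTc := radialOp_continuousOn (b := b) hm hr
    (intervalIntegrable_comp hφ hS.continuousOn hS0 ⟨hr, le_rfl⟩)
  refine ⟨hTc, hTb, fun t ht => radialOp_le_radialOp hm ht.1
    (intervalIntegrable_comp hφ hTc (fun x hx => hb.trans (hTb x hx)) ht)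
    (intervalIntegrable_comp hφ hS.continuousOn hS0 ht) fun x hx => ?_⟩
  have hx' : x ∈ Icc 0 r := ⟨hx.1, hx.2.trans ht.2⟩
  exact hφm (hb.trans (hTb x hx')) (hb.trans (hS.le_apply x hx')) (hS.radialOp_le x hx')

theorem iterate (hm : 1 ≤ m) (hφ : ContinuousOn φ (Ici 0)) (hφm : MonotoneOn φ (Ici 0))
    (hφ0 : ∀ t, 0 ≤ t → 0 ≤ φ t) (hb : 0 ≤ b) (hr : 0 ≤ r)
    (hS : IsSupersolution m φ b (Icc 0 r) S) (n : ℕ) :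
    IsSupersolution m φ b (Icc 0 r) ((radialOp m φ b)^[n] S) := by
  induction n with
  | zero => exact hS
  | succ n ih =>
    rw [Function.iterate_succ_apply']
    exact ih.map_radialOp hm hφ hφm hφ0 hb hr

theorem antitone_iterate (hm : 1 ≤ m) (hφ : ContinuousOn φ (Ici 0)) (hφm : MonotoneOn φ (Ici 0))
    (hφ0 : ∀ t, 0 ≤ t → 0 ≤ φ t) (hb : 0 ≤ b) (hr : 0 ≤ r)
    (hS : IsSupersolution m φ b (Icc 0 r) S) {t : ℝ} (ht : t ∈ Icc 0 r) :
    Antitone fun n => (radialOp m φ b)^[n] S t :=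
  antitone_nat_of_succ_le fun n => by
    rw [Function.iterate_succ_apply']
    exact (hS.iterate hm hφ hφm hφ0 hb hr n).radialOp_le t ht

theorem le_iterateLimit (hm : 1 ≤ m) (hφ : ContinuousOn φ (Ici 0)) (hφm : MonotoneOn φ (Ici 0))
    (hφ0 : ∀ t, 0 ≤ t → 0 ≤ φ t) (hb : 0 ≤ b) (hr : 0 ≤ r)
    (hS : IsSupersolution m φ b (Icc 0 r) S) {t : ℝ} (ht : t ∈ Icc 0 r) :
    b ≤ iterateLimit m φ b S t :=
  le_ciInf fun n => (hS.iterate hm hφ hφm hφ0 hb hr n).le_apply t ht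

theorem tendsto_iterate (hm : 1 ≤ m) (hφ : ContinuousOn φ (Ici 0)) (hφm : MonotoneOn φ (Ici 0))
    (hφ0 : ∀ t, 0 ≤ t → 0 ≤ φ t) (hb : 0 ≤ b) (hr : 0 ≤ r)
    (hS : IsSupersolution m φ b (Icc 0 r) S) {t : ℝ} (ht : t ∈ Icc 0 r) :
    Tendsto (fun n => (radialOp m φ b)^[n] S t) atTop (𝓝 (iterateLimit m φ b S t)) :=
  tendsto_atTop_ciInf (hS.antitone_iterate hm hφ hφm hφ0 hb hr ht)
    ⟨b, by rintro _ ⟨n, rfl⟩; exact (hS.iterate hm hφ hφm hφ0 hb hr n).le_apply t ht⟩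

theorem radialOp_iterateLimit (hm : 1 ≤ m) (hφ : ContinuousOn φ (Ici 0))
    (hφm : MonotoneOn φ (Ici 0)) (hφ0 : ∀ t, 0 ≤ t → 0 ≤ φ t) (hb : 0 ≤ b) (hr : 0 ≤ r)
    (hS : IsSupersolution m φ b (Icc 0 r) S) {t : ℝ} (ht : t ∈ Icc 0 r) :
    radialOp m φ b (iterateLimit m φ b S) t = iterateLimit m φ b S t := by
  have hsub : Icc 0 t ⊆ Icc 0 r := Icc_subset_Icc_right ht.2
  have hit := fun n => hS.iterate hm hφ hφm hφ0 hb hr n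
  have hit0 : ∀ n, ∀ s ∈ Icc 0 t, 0 ≤ (radialOp m φ b)^[n] S s := fun n s hs =>
    hb.trans ((hit n).le_apply s (hsub hs))
  obtain ⟨M, hM⟩ := isCompact_Icc.exists_bound_of_continuousOn hS.continuousOn
  refine tendsto_nhds_unique ?_ ((hS.tendsto_iterate hm hφ hφm hφ0 hb hr ht).comp
    (tendsto_add_atTop_nat 1))
  simp only [Function.comp_def, Function.iterate_succ_apply']
  refine tendsto_const_nhds.add (tendsto_integral_radialFlux (C := φ M) hm ht.1
    (fun n => hφ.comp ((hit n).continuousOn.mono hsub) (hit0 n)) (fun n s hs => ?_) fun s hs => ?_)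
  · have hSM : (radialOp m φ b)^[n] S s ≤ M :=
      (hS.antitone_iterate hm hφ hφm hφ0 hb hr (hsub hs) (Nat.zero_le n)).trans
        ((le_abs_self _).trans (hM s (hsub hs)))
    rw [abs_of_nonneg (hφ0 _ (hit0 n s hs))]
    exact hφm (hit0 n s hs) ((hit0 n s hs).trans hSM) hSM
  · exact (hφ _ (hb.trans (hS.le_iterateLimit hm hφ hφm hφ0 hb hr (hsub hs)))).tendsto.comp
      (tendsto_nhdsWithin_iff.2 ⟨hS.tendsto_iterate hm hφ hφm hφ0 hb hr (hsub hs),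
        Eventually.of_forall fun n => hit0 n s hs⟩)

theorem continuousOn_iterateLimit (hm : 1 ≤ m) (hφ : ContinuousOn φ (Ici 0))
    (hφm : MonotoneOn φ (Ici 0)) (hφ0 : ∀ t, 0 ≤ t → 0 ≤ φ t) (hb : 0 ≤ b) (hr : 0 ≤ r)
    (hS : IsSupersolution m φ b (Icc 0 r) S) :
    ContinuousOn (iterateLimit m φ b S) (Icc 0 r) := by
  -- The limit is monotone, so `φ` of it is integrable; being a fixed point, it is continuous.
  have hmono : MonotoneOn (iterateLimit m φ b S) (Icc 0 r) := by
    intro x hx y hy hxy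
    have hit := hS.iterate hm hφ hφm hφ0 hb hr
    refine le_ciInf fun n => ((hS.antitone_iterate hm hφ hφm hφ0 hb hr hx).le_of_tendsto
      (hS.tendsto_iterate hm hφ hφm hφ0 hb hr hx) (n + 1)).trans
      (le_trans ?_ ((hit n).radialOp_le y hy))
    rw [Function.iterate_succ_apply']
    exact radialOp_monotoneOn hm (intervalIntegrable_comp hφ (hit n).continuousOn
      (fun s hs => hb.trans ((hit n).le_apply s hs)) ⟨hr, le_rfl⟩)
      (fun s hs => hφ0 _ (hb.trans ((hit n).le_apply s hs))) hx hy hxy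
  have hint : IntervalIntegrable (fun t => φ (iterateLimit m φ b S t)) volume 0 r := by
    refine MonotoneOn.intervalIntegrable ?_
    rw [uIcc_of_le hr]
    exact hφm.comp hmono fun t ht => hb.trans (hS.le_iterateLimit hm hφ hφm hφ0 hb hr ht)
  exact (radialOp_continuousOn hm hr hint).congr fun t ht =>
    (hS.radialOp_iterateLimit hm hφ hφm hφ0 hb hr ht).symm

end IsSupersolution

theorem exists_isSolOn_of_isSupersolution {m b : ℝ} {φ S : ℝ → ℝ} {ρ : ℝ≥0∞} (hm : 1 ≤ m)
    (hφ : ContinuousOn φ (Ici 0)) (hφm : MonotoneOn φ (Ici 0)) (hφ0 : ∀ t, 0 ≤ t → 0 ≤ φ t)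
    (hb : 0 ≤ b) (hρ : 0 < ρ) (hS : IsSupersolution m φ b (odeDom ρ) S) :
    ∃ u, IsSolOn m φ b ρ u := by
  have hS' : ∀ r, ENNReal.ofReal r < ρ → IsSupersolution m φ b (Icc 0 r) S := fun r hr =>
    hS.mono (Icc_subset_odeDom hr)
  refine ⟨_, isSolOn_radialOp hm hφ hρ (continuousOn_odeDom fun r hr hrρ =>
      (hS' r hrρ).continuousOn_iterateLimit hm hφ hφm hφ0 hb hr.le) (fun r hr => ?_) fun r hr =>
      (hS' r hr.2).radialOp_iterateLimit hm hφ hφm hφ0 hb hr.1 ⟨hr.1, le_rfl⟩⟩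
  exact hb.trans ((hS' r hr.2).le_iterateLimit hm hφ hφm hφ0 hb hr.1 ⟨hr.1, le_rfl⟩)

section MaxRadius

variable {m a b : ℝ} {φ : ℝ → ℝ} {R : ℝ≥0∞} {u : ℝ → ℝ}

theorem le_maxRadius (hR : 0 < R) (hu : IsSolOn m φ a R u) : R ≤ maxRadius m φ a :=
  le_sSup ⟨hR, u, hu⟩

theorem isSolOn_const (hb : 0 ≤ b) (hφb : φ b = 0) : IsSolOn m φ b ⊤ fun _ => b :=
  ⟨contDiffOn_const, fun _ _ => hb, rfl, by simp, fun _ _ _ => by simp [hφb]⟩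

theorem maxRadius_eq_top (hb : 0 ≤ b) (hφb : φ b = 0) : maxRadius m φ b = ⊤ :=
  top_le_iff.1 (le_maxRadius ENNReal.zero_lt_top (isSolOn_const hb hφb))

theorem maxRadius_antitoneOn (hm : 1 ≤ m) (hφ : ContinuousOn φ (Ici 0))
    (hφm : MonotoneOn φ (Ici 0)) (hφ0 : ∀ t, 0 ≤ t → 0 ≤ φ t) :
    AntitoneOn (maxRadius m φ) (Ici 0) := by
  intro b hb a _ hba
  refine sSup_le ?_
  rintro R ⟨hR, u, hu⟩
  have hS : IsSupersolution m φ b (odeDom R) u := by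
    refine ⟨hu.1.continuousOn, fun r hr => hba.trans (hu.le_apply hm hφ hφ0 hr),
      fun r hr => ?_⟩
    have := hu.eq_radialOp hm hφ hr.1 hr.2
    simp only [radialOp] at this ⊢
    linarith
  obtain ⟨v, hv⟩ := exists_isSolOn_of_isSupersolution hm hφ hφm hφ0 hb hR hS
  exact le_maxRadius hR hv

theorem IsSolOn.sub_le_maxRadius (hm : 1 ≤ m) (hφ : ContinuousOn φ (Ici 0))
    (hφm : MonotoneOn φ (Ici 0)) (hφ0 : ∀ t, 0 ≤ t → 0 ≤ φ t) (hu : IsSolOn m φ b R u)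
    {r c : ℝ} (hr : 0 ≤ r) (hrR : ENNReal.ofReal r < R) (hc : 0 ≤ c) (hcu : c ≤ u r) :
    R - ENNReal.ofReal r ≤ maxRadius m φ c := by
  have hmem : ∀ s ∈ odeDom (R - ENNReal.ofReal r), ENNReal.ofReal (r + s) < R := fun s hs => by
    rw [ENNReal.ofReal_add hr hs.1, add_comm]
    exact lt_tsub_iff_right.1 hs.2
  have hS : IsSupersolution m φ c (odeDom (R - ENNReal.ofReal r)) fun s => u (r + s) := by
    refine ⟨hu.1.continuousOn.comp (continuous_const_add r).continuousOn
      fun s hs => ⟨by linarith [hs.1], hmem s hs⟩, fun s hs => ?_, fun s hs => ?_⟩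
    · exact hcu.trans (hu.monotoneOn hm hφ hφ0 ⟨hr, hrR⟩ ⟨by linarith [hs.1], hmem s hs⟩
        (by linarith [hs.1]))
    · refine le_trans ?_ (hu.radialOp_shift_le hm hφ hφ0 hr hs.1 (hmem s hs))
      simp only [radialOp]
      linarith
  obtain ⟨v, hv⟩ :=
    exists_isSolOn_of_isSupersolution hm hφ hφm hφ0 hc (tsub_pos_of_lt hrR) hS
  exact le_maxRadius (tsub_pos_of_lt hrR) hv

theorem integral_mul_exp_sq {K r : ℝ} (hm : m ≠ 0) :
    ∫ s in (0:ℝ)..r, K / m * s * exp (K * s ^ 2 / (2 * m)) = exp (K * r ^ 2 / (2 * m)) - 1 := by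
  have hderiv : ∀ s ∈ uIcc 0 r, HasDerivAt (fun x => exp (K * x ^ 2 / (2 * m)))
      (K / m * s * exp (K * s ^ 2 / (2 * m))) s := fun s _ => by
    convert (((hasDerivAt_pow 2 s).const_mul K).div_const (2 * m)).exp using 1
    field_simp
    ring
  rw [intervalIntegral.integral_eq_sub_of_hasDerivAt hderiv
    ((by fun_prop : Continuous fun s : ℝ => K / m * s * exp (K * s ^ 2 / (2 * m))
      ).intervalIntegrable 0 r)]
  simp

theorem isSupersolution_add_mul_exp (hm : 1 ≤ m) (hφ : ContinuousOn φ (Ici 0)) {K δ T : ℝ}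
    (ha : 0 ≤ a) (hab : a ≤ b) (hK : 0 ≤ K) (hlin : ∀ t ∈ Icc a (a + δ), φ t ≤ K * (t - a))
    (hsmall : (b - a) * exp (K * T ^ 2 / (2 * m)) ≤ δ) :
    IsSupersolution m φ b (odeDom (ENNReal.ofReal T))
      fun r => a + (b - a) * exp (K * r ^ 2 / (2 * m)) := by
  have hm0 : 0 < m := by linarith
  have hE1 : ∀ r : ℝ, 1 ≤ exp (K * r ^ 2 / (2 * m)) := fun r => one_le_exp (by positivity)
  have hEmono : ∀ {x y : ℝ}, 0 ≤ x → x ≤ y →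
      exp (K * x ^ 2 / (2 * m)) ≤ exp (K * y ^ 2 / (2 * m)) := fun hx hxy =>
    exp_le_exp.2 (by gcongr)
  have hSb : ∀ r, b ≤ a + (b - a) * exp (K * r ^ 2 / (2 * m)) := fun r => by
    nlinarith [hE1 r]
  have hφS : ∀ {r s : ℝ}, 0 ≤ s → s ≤ r → r ≤ T →
      φ (a + (b - a) * exp (K * s ^ 2 / (2 * m))) ≤ K * (b - a) * exp (K * r ^ 2 / (2 * m)) := by
    intro r s hs hsr hrT
    calc _ ≤ K * (b - a) * exp (K * s ^ 2 / (2 * m)) := by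
          refine (hlin _ ⟨by nlinarith [hE1 s], ?_⟩).trans_eq (by ring)
          nlinarith [hEmono hs (hsr.trans hrT)]
      _ ≤ _ := mul_le_mul_of_nonneg_left (hEmono hs hsr) (by nlinarith)
  have hSc : Continuous fun r => a + (b - a) * exp (K * r ^ 2 / (2 * m)) := by fun_prop
  refine ⟨hSc.continuousOn, fun r _ => hSb r, fun r hr => ?_⟩
  have hrT : r ≤ T := (ENNReal.ofReal_lt_ofReal_iff'.1 hr.2).1.le
  have hint : ∀ s ∈ Icc 0 r, IntervalIntegrable
      (fun t => φ (a + (b - a) * exp (K * t ^ 2 / (2 * m)))) volume 0 s := fun s hs =>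
    intervalIntegrable_comp hφ hSc.continuousOn (fun t _ => (ha.trans hab).trans (hSb t)) hs
  -- The flux bound coming from `φ t ≤ K (t - a)` integrates exactly to the candidate.
  calc radialOp m φ b _ r
      ≤ b + ∫ s in (0:ℝ)..r, K / m * s * exp (K * s ^ 2 / (2 * m)) * (b - a) := by
        refine (add_le_add_iff_left b).2 (intervalIntegral.integral_mono_on hr.1
          (radialFlux_intervalIntegrable hm hr.1 (hint r ⟨hr.1, le_rfl⟩))
          ((by fun_prop : Continuous fun s : ℝ => K / m * s * exp (K * s ^ 2 / (2 * m)) *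
            (b - a)).intervalIntegrable 0 r) fun s hs => ?_)
        refine (radialFlux_le hm hs.1 (hint s hs) fun t ht =>
          hφS ht.1 ht.2 (hs.2.trans hrT)).trans_eq ?_
        ring
    _ = a + (b - a) * exp (K * r ^ 2 / (2 * m)) := by
        rw [intervalIntegral.integral_mul_const, integral_mul_exp_sq hm0.ne']
        ring

theorem ofReal_le_maxRadius_of_le_mul_sub (hm : 1 ≤ m) (hφ : ContinuousOn φ (Ici 0))
    (hφm : MonotoneOn φ (Ici 0)) (hφ0 : ∀ t, 0 ≤ t → 0 ≤ φ t) {K δ T : ℝ} (ha : 0 ≤ a)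
    (hab : a ≤ b) (hK : 0 ≤ K) (hlin : ∀ t ∈ Icc a (a + δ), φ t ≤ K * (t - a))
    (hsmall : (b - a) * exp (K * T ^ 2 / (2 * m)) ≤ δ) :
    ENNReal.ofReal T ≤ maxRadius m φ b := by
  rcases le_or_gt T 0 with hT | hT
  · simp [ENNReal.ofReal_of_nonpos hT]
  obtain ⟨v, hv⟩ := exists_isSolOn_of_isSupersolution hm hφ hφm hφ0 (ha.trans hab)
    (ENNReal.ofReal_pos.2 hT) (isSupersolution_add_mul_exp hm hφ ha hab hK hlin hsmall)
  exact le_maxRadius (ENNReal.ofReal_pos.2 hT) hv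

end MaxRadius

section Semicontinuity

variable {m a : ℝ} {φ : ℝ → ℝ} {c : ℝ≥0∞}

theorem eventually_ofReal_le_maxRadius (hm : 1 ≤ m) (hφ : LocallyLipschitzOn (Ici 0) φ)
    (hφm : MonotoneOn φ (Ici 0)) (hφ0 : ∀ t, 0 ≤ t → 0 ≤ φ t) (ha : 0 ≤ a) (hφa : φ a = 0)
    (T : ℝ) : ∀ᶠ b in 𝓝[Ici 0] a, ENNReal.ofReal T ≤ maxRadius m φ b := by
  obtain ⟨K, δ, hK, hδ, hlin⟩ := exists_le_mul_sub_of_locallyLipschitzOn hφ ha hφa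
  have hE := exp_pos (K * T ^ 2 / (2 * m))
  filter_upwards [self_mem_nhdsWithin, mem_nhdsWithin_of_mem_nhds
    (Iio_mem_nhds (lt_add_of_pos_right a (div_pos hδ hE)))] with b hb hbδ
  rcases le_or_gt b a with hba | hab
  · calc ENNReal.ofReal T ≤ maxRadius m φ a := le_top.trans (maxRadius_eq_top ha hφa).ge
      _ ≤ maxRadius m φ b := maxRadius_antitoneOn hm hφ.continuousOn hφm hφ0 hb ha hba
  · refine ofReal_le_maxRadius_of_le_mul_sub hm hφ.continuousOn hφm hφ0 ha hab.le hK hlin ?_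
    exact ((lt_div_iff₀ hE).1 (by linarith [show b < a + δ / _ from hbδ])).le

theorem eventually_lt_maxRadius_of_pos (hm : 1 ≤ m) (hφ : ContinuousOn φ (Ici 0))
    (hφm : MonotoneOn φ (Ici 0)) (hφ0 : ∀ t, 0 ≤ t → 0 ≤ φ t) (hφa : 0 < φ a)
    (hc : c < maxRadius m φ a) : ∀ᶠ b in 𝓝[Ici 0] a, c < maxRadius m φ b := by
  obtain ⟨R, ⟨hR, u, hu⟩, hcR⟩ := lt_sSup_iff.1 hc
  obtain ⟨r, hr, hcrR⟩ := exists_pos_add_ofReal_lt hcR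
  have hrR : ENNReal.ofReal r < R := le_add_self.trans_lt hcrR
  have hau : a < u r := (lt_add_of_pos_right a (by positivity)).trans_le
    (hu.add_le hm hφ hφm hφ0 ⟨hr.le, hrR⟩)
  filter_upwards [self_mem_nhdsWithin, mem_nhdsWithin_of_mem_nhds (Iio_mem_nhds hau)]
    with b hb hbu
  exact (lt_tsub_iff_right.2 hcrR).trans_le
    (hu.sub_le_maxRadius hm hφ hφm hφ0 hr.le hrR hb hbu.le)

theorem eventually_lt_maxRadius (hm : 1 ≤ m) (hφ : LocallyLipschitzOn (Ici 0) φ)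
    (hφm : MonotoneOn φ (Ici 0)) (hφ0 : ∀ t, 0 ≤ t → 0 ≤ φ t) (ha : 0 ≤ a)
    (hc : c < maxRadius m φ a) : ∀ᶠ b in 𝓝[Ici 0] a, c < maxRadius m φ b := by
  rcases (hφ0 a ha).eq_or_lt with hφa | hφa
  · have hcT : c < ENNReal.ofReal (c.toReal + 1) :=
      (ENNReal.lt_ofReal_iff_toReal_lt hc.ne_top).2 (lt_add_one _)
    filter_upwards [eventually_ofReal_le_maxRadius hm hφ hφm hφ0 ha hφa.symm (c.toReal + 1)]
      with b hb using hcT.trans_le hb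
  · exact eventually_lt_maxRadius_of_pos hm hφ.continuousOn hφm hφ0 hφa hc

theorem maxRadius_le_add (hm : 1 ≤ m) (hφ : ContinuousOn φ (Ici 0)) (hφm : MonotoneOn φ (Ici 0))
    (hφ0 : ∀ t, 0 ≤ t → 0 ≤ φ t) (ha : 0 ≤ a) {b ε : ℝ} (hε : 0 ≤ ε)
    (h : a ≤ b + φ b / m * (ε ^ 2 / 2)) :
    maxRadius m φ b ≤ maxRadius m φ a + ENNReal.ofReal ε := by
  refine sSup_le ?_
  rintro R ⟨hR, u, hu⟩
  -- A solution from `b` has passed `a` at radius `ε`; restarting it there from `a` gives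
  -- `R - ε ≤ R_a`.
  by_cases hεR : ENNReal.ofReal ε < R
  · exact tsub_le_iff_right.1 (hu.sub_le_maxRadius hm hφ hφm hφ0 hε hεR ha
      (h.trans (hu.add_le hm hφ hφm hφ0 ⟨hε, hεR⟩)))
  · exact (not_lt.1 hεR).trans le_add_self

theorem eventually_maxRadius_lt (hm : 1 ≤ m) (hφ : ContinuousOn φ (Ici 0))
    (hφm : MonotoneOn φ (Ici 0)) (hφ0 : ∀ t, 0 ≤ t → 0 ≤ φ t) (ha : 0 ≤ a)
    (hc : maxRadius m φ a < c) : ∀ᶠ b in 𝓝[Ici 0] a, maxRadius m φ b < c := by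
  have hφa : 0 < φ a := (hφ0 a ha).lt_of_ne fun h => by simp [maxRadius_eq_top ha h.symm] at hc
  obtain ⟨ε, hε, hεc⟩ := exists_pos_add_ofReal_lt hc
  have hm0 : 0 < m := by linarith
  have hη : 0 < φ a / 2 / m * (ε ^ 2 / 2) := by positivity
  filter_upwards [self_mem_nhdsWithin,
    (hφ a ha).tendsto.eventually (lt_mem_nhds (half_lt_self hφa)),
    mem_nhdsWithin_of_mem_nhds (Ioi_mem_nhds (sub_lt_self a hη))] with b hb hφb hab
  rcases le_total a b with hab' | hba
  · exact (maxRadius_antitoneOn hm hφ hφm hφ0 ha hb hab').trans_lt hc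
  · refine (maxRadius_le_add hm hφ hφm hφ0 ha hε.le ?_).trans_lt hεc
    have : φ a / 2 / m * (ε ^ 2 / 2) ≤ φ b / m * (ε ^ 2 / 2) := by gcongr
    linarith [show a - φ a / 2 / m * (ε ^ 2 / 2) < b from hab]

end Semicontinuity

theorem maxRadius_continuous_general
    (m : ℝ) (hm : 2 < m)
    (φ : ℝ → ℝ)
    (hφmono : MonotoneOn φ (Set.Ici 0))
    (hφnonneg : ∀ t : ℝ, 0 ≤ t → 0 ≤ φ t)
    (hφlip : ∀ x ∈ Set.Ici (0 : ℝ), ∃ K : NNReal, ∃ s ∈ nhdsWithin x (Set.Ici 0),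
      LipschitzOnWith K φ s)
 :
    ∀ a : ℝ, 0 ≤ a →
      Tendsto (fun b : ℝ => maxRadius m φ b) (nhdsWithin a (Set.Ici 0))
        (nhds (maxRadius m φ a)) := by
  intro a ha
  have hm1 : 1 ≤ m := by linarith
  have hφ : LocallyLipschitzOn (Ici 0) φ := fun x hx => hφlip x hx
  exact tendsto_order.2
    ⟨fun c hc => eventually_lt_maxRadius hm1 hφ hφmono hφnonneg ha hc,
      fun c hc => eventually_maxRadius_lt hm1 hφ.continuousOn hφmono hφnonneg ha hc⟩

/-- continuity of the maximal existence radius in the initial value. -/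
theorem maxRadius_continuous
    (m : ℝ) (hm : 2 < m)
    (φ : ℝ → ℝ) (hφ0 : φ 0 = 0)
    (hφmono : MonotoneOn φ (Set.Ici 0))
    (hφnonneg : ∀ t : ℝ, 0 ≤ t → 0 ≤ φ t)
    (hφlip : ∀ x ∈ Set.Ici (0 : ℝ), ∃ K : NNReal, ∃ s ∈ nhdsWithin x (Set.Ici 0),
      LipschitzOnWith K φ s)
 :
    ∀ a : ℝ, 0 ≤ a →
      Tendsto (fun b : ℝ => maxRadius m φ b) (nhdsWithin a (Set.Ici 0))
        (nhds (maxRadius m φ a)) :=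
  maxRadius_continuous_general m hm φ hφmono hφnonneg hφlip
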